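/- Torso preserves S-closed-walks: Let G be a directed graph, C ⊆ V(G), S ⊆ E(G), and (G', S') = torso(G, C, S). Then for any v ∈ C and W ⊆ C, G ∖ W has a closed walk through v using an edge of S if and only if G' ∖ W has a closed walk through v using an edge of S'. -/

import Mathlib

variable {V : Type*}

/-- `Reach E W a b`: there is a path from `a` to `b` in `G ∖ W`. -/
def Reach (E : V → V → Prop) (W : Set V) (a b : V) : Prop :=
  a ∉ W ∧ b ∉ W ∧ Relation.ReflTransGen (fun x y => E x y ∧ x ∉ W ∧ y ∉ W) a b

/-- `l` is a walk from `a` to `b` in the graph with edge relation `E`. -/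
def WalkFromTo (E : V → V → Prop) (a b : V) (l : List V) : Prop :=
  l.Chain' E ∧ l.head? = some a ∧ l.getLast? = some b

/-- The edge relation of the torso of `G` on `C`: there is an edge `(a,b)`
whenever `G` has an `a → b` walk whose internal vertices all lie outside `C`. -/
def torsoE (E : V → V → Prop) (C : Set V) : V → V → Prop := fun a b =>
  a ∈ C ∧ b ∈ C ∧ ∃ l : List V, WalkFromTo E a b l ∧ 2 ≤ l.length ∧
    ∀ x ∈ l.tail.dropLast, x ∉ C

/-- The marked edge set `S'` of the torso: edges of `S` with both endpoints in
`C`, together with every torso edge `(a,b)` arising from an `a → b` walk with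
internal vertices outside `C` that contains an edge of `S`. -/
def torsoS (E : V → V → Prop) (C : Set V) (S : Set (V × V)) : Set (V × V) :=
  {p | p ∈ S ∧ p.1 ∈ C ∧ p.2 ∈ C} ∪
    {p | p.1 ∈ C ∧ p.2 ∈ C ∧ ∃ l : List V, WalkFromTo E p.1 p.2 l ∧
      2 ≤ l.length ∧ (∀ x ∈ l.tail.dropLast, x ∉ C) ∧
      ∃ q ∈ l.zip l.tail, q ∈ S}

/-- `G ∖ W` has a closed walk through `v` using an edge of `S`. -/
def HasSCWThrough (E : V → V → Prop) (S : Set (V × V)) (W : Set V) (v : V) : Prop :=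
  ∃ l : List V, l.Chain' E ∧ 2 ≤ l.length ∧ l.head? = l.getLast? ∧
    (∀ x ∈ l, x ∉ W) ∧ v ∈ l ∧ ∃ q ∈ l.zip l.tail, q ∈ S

/-- `G ∖ W` has a closed walk using an edge of `S` (an `S`-closed-walk). -/
def HasSCW (E : V → V → Prop) (S : Set (V × V)) (W : Set V) : Prop :=
  ∃ v, HasSCWThrough E S W v

/-!
An `S`-closed walk through `v` amounts to an edge `(x, y) ∈ S` with walks `v ⇝ x` and `y ⇝ v`.
A walk between vertices of `C` splits at its visits to `C` into segments whose interior avoids `C`,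
and these segments are exactly the torso edges; the segment through `(x, y)` is an `S'`-edge.
Conversely, since `W ⊆ C`, a torso edge between vertices outside `W` expands to a walk in `G ∖ W`.
A segment with interior outside `C` through the edge `(x, y)` is a walk whose steps before `x` all
enter `Cᶜ` and whose steps after `y` all leave `Cᶜ`.
-/

open Relation

namespace List

variable {α : Type*} {R : α → α → Prop} {P : α → Prop}

theorem mem_zip_tail_iff {x y : α} {l : List α} :
    (x, y) ∈ l.zip l.tail ↔ ∃ l₁ l₂, l = l₁ ++ x :: y :: l₂ := by
  induction l with
  | nil => simp
  | cons a t ih =>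
    cases t with
    | nil =>
      simp only [tail_cons, zip_nil_right, not_mem_nil, false_iff, not_exists]
      intro l₁ l₂ h
      have := congrArg length h
      simp only [length_cons, length_nil, length_append] at this
      omega
    | cons b t =>
      simp only [tail_cons, zip_cons_cons, mem_cons, Prod.mk.injEq] at ih ⊢
      rw [ih]
      constructor
      · rintro (⟨rfl, rfl⟩ | ⟨l₁, l₂, h⟩)
        · exact ⟨[], t, rfl⟩
        · exact ⟨a :: l₁, l₂, by rw [h, cons_append]⟩
      · rintro ⟨_ | ⟨c, l₁⟩, l₂, h⟩
        · simp_all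
        · simp only [cons_append, cons.injEq] at h
          exact Or.inr ⟨l₁, l₂, h.2⟩

theorem two_le_length_of_mem_zip_tail {x y : α} {l : List α} (h : (x, y) ∈ l.zip l.tail) :
    2 ≤ l.length := by
  obtain ⟨l₁, l₂, rfl⟩ := mem_zip_tail_iff.1 h
  simp only [length_append, length_cons]
  omega

theorem tail_dropLast_append_cons_cons (l₁ l₂ : List α) (x y : α) :
    (l₁ ++ x :: y :: l₂).tail.dropLast = (l₁ ++ [x]).tail ++ (y :: l₂).dropLast := by
  rw [← singleton_append, ← append_assoc, tail_append_of_ne_nil (by simp),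
    dropLast_append_of_ne_nil (cons_ne_nil y l₂)]

theorem isChain_and_right_iff {l : List α} :
    IsChain (fun p q => R p q ∧ P q) l ↔ IsChain R l ∧ ∀ z ∈ l.tail, P z := by
  induction l using twoStepInduction with
  | nil => simp
  | singleton => simp
  | cons_cons a b t _ ih =>
    simp only [isChain_cons_cons, ih, tail_cons, mem_cons, forall_eq_or_imp]
    tauto

theorem isChain_and_left_iff {l : List α} :
    IsChain (fun p q => R p q ∧ P p) l ↔ IsChain R l ∧ ∀ z ∈ l.dropLast, P z := by
  induction l using twoStepInduction with
  | nil => simp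
  | singleton => simp
  | cons_cons a b t _ ih =>
    simp only [isChain_cons_cons, ih, dropLast_cons_cons, mem_cons, forall_eq_or_imp]
    tauto

end List

section Walks

variable {R : V → V → Prop} {a b : V} {l : List V}

theorem walkFromTo_iff :
    WalkFromTo R a b l ↔ l.IsChain R ∧ l.head? = some a ∧ l.getLast? = some b :=
  Iff.rfl

namespace WalkFromTo

theorem exists_eq_cons (h : WalkFromTo R a b l) : ∃ t, l = a :: t :=
  List.head?_eq_some_iff.1 h.2.1

theorem exists_eq_concat (h : WalkFromTo R a b l) : ∃ t, l = t ++ [b] :=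
  List.getLast?_eq_some_iff.1 h.2.2

theorem head_mem (h : WalkFromTo R a b l) : a ∈ l := by
  obtain ⟨t, rfl⟩ := h.exists_eq_cons
  exact List.mem_cons_self

theorem getLast_mem (h : WalkFromTo R a b l) : b ∈ l := by
  obtain ⟨t, rfl⟩ := h.exists_eq_concat
  exact List.mem_concat_self

theorem reflTransGen_of_mem (h : WalkFromTo R a b l) {u : V} (hu : u ∈ l) :
    ReflTransGen R a u ∧ ReflTransGen R u b := by
  obtain ⟨hc, hh, hl⟩ := h
  refine ⟨hc.induction (ReflTransGen R a ·) _ (fun _ _ hxy h => h.tail hxy) ?_ u hu,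
    hc.backwards_induction (ReflTransGen R · b) _ (fun _ _ hxy h => h.head hxy) ?_ u hu⟩
  · intro hne
    rw [(List.head_eq_iff_head?_eq_some hne).2 hh]
  · intro hne
    rw [(List.getLast_eq_iff_getLast?_eq_some hne).2 hl]

theorem reflTransGen (h : WalkFromTo R a b l) : ReflTransGen R a b :=
  (h.reflTransGen_of_mem h.getLast_mem).1

theorem append_cons_cons_iff {l₁ l₂ : List V} {x y : V} :
    WalkFromTo R a b (l₁ ++ x :: y :: l₂) ↔
      WalkFromTo R a x (l₁ ++ [x]) ∧ R x y ∧ WalkFromTo R y b (y :: l₂) := by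
  rw [← List.singleton_append, ← List.append_assoc, walkFromTo_iff, List.isChain_append,
    List.head?_append_of_ne_nil _ (List.concat_ne_nil x l₁),
    List.getLast?_append_of_ne_nil _ (List.cons_ne_nil y l₂)]
  simp only [walkFromTo_iff, List.getLast?_concat, List.head?_cons, Option.mem_def,
    Option.some.injEq, forall_eq']
  tauto

end WalkFromTo

theorem Relation.ReflTransGen.exists_walkFromTo (h : ReflTransGen R a b) :
    ∃ l, WalkFromTo R a b l := by
  obtain ⟨t, hc, hl⟩ := List.exists_isChain_cons_of_relationReflTransGen h
  exact ⟨a :: t, hc, rfl, by rw [List.getLast?_eq_some_getLast (List.cons_ne_nil a t), hl]⟩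

end Walks

section Reach

variable {E : V → V → Prop} {W : Set V} {a b c : V}

theorem Reach.trans (h₁ : Reach E W a b) (h₂ : Reach E W b c) : Reach E W a c :=
  ⟨h₁.1, h₂.2.1, h₁.2.2.trans h₂.2.2⟩

theorem Reach.tail (h : Reach E W a b) (hbc : E b c) (hc : c ∉ W) : Reach E W a c :=
  ⟨h.1, hc, h.2.2.tail ⟨hbc, h.2.1, hc⟩⟩

theorem Reach.head (hab : E a b) (ha : a ∉ W) (h : Reach E W b c) : Reach E W a c :=
  ⟨ha, h.2.1, h.2.2.head ⟨hab, ha, h.1⟩⟩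

theorem WalkFromTo.reach_of_mem {l : List V} (h : WalkFromTo E a b l) (hl : ∀ z ∈ l, z ∉ W)
    {u : V} (hu : u ∈ l) : Reach E W a u ∧ Reach E W u b := by
  have hD : WalkFromTo (fun x y => E x y ∧ x ∉ W ∧ y ∉ W) a b l :=
    ⟨(List.IsChain.iff_mem.1 h.1).imp fun x y ⟨hx, hy, hxy⟩ => ⟨hxy, hl x hx, hl y hy⟩, h.2⟩
  obtain ⟨hau, hub⟩ := hD.reflTransGen_of_mem hu
  exact ⟨⟨hl a h.head_mem, hl u hu, hau⟩, ⟨hl u hu, hl b h.getLast_mem, hub⟩⟩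

theorem reach_iff_exists_walkFromTo :
    Reach E W a b ↔ ∃ l, WalkFromTo E a b l ∧ ∀ z ∈ l, z ∉ W := by
  constructor
  · rintro ⟨ha, -, hab⟩
    obtain ⟨l, hl⟩ := hab.exists_walkFromTo
    refine ⟨l, ⟨hl.1.imp fun _ _ h => h.1, hl.2⟩, fun z hz => ?_⟩
    rcases (hl.reflTransGen_of_mem hz).1.cases_tail with rfl | ⟨_, _, h⟩
    exacts [ha, h.2.2]
  · rintro ⟨l, hl, hW⟩
    exact (hl.reach_of_mem hW hl.getLast_mem).1

theorem hasSCWThrough_iff {S : Set (V × V)} {v : V} (hSE : ∀ p ∈ S, E p.1 p.2) :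
    HasSCWThrough E S W v ↔ ∃ q ∈ S, Reach E W v q.1 ∧ Reach E W q.2 v := by
  constructor
  · rintro ⟨l, hc, hlen, hcl, hW, hv, ⟨x, y⟩, hxy, hS⟩
    obtain ⟨u, hu⟩ : ∃ u, l.head? = some u :=
      Option.ne_none_iff_exists'.1 (by rintro h; simp [List.head?_eq_none_iff.1 h] at hlen)
    have hl : WalkFromTo E u u l := ⟨hc, hu, hcl ▸ hu⟩
    have hx := (List.of_mem_zip hxy).1
    have hy := List.mem_of_mem_tail (List.of_mem_zip hxy).2
    exact ⟨(x, y), hS, (hl.reach_of_mem hW hv).2.trans (hl.reach_of_mem hW hx).1,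
      (hl.reach_of_mem hW hy).2.trans (hl.reach_of_mem hW hv).1⟩
  · rintro ⟨⟨x, y⟩, hS, hvx, hyv⟩
    obtain ⟨_, h₁, hW₁⟩ := reach_iff_exists_walkFromTo.1 hvx
    obtain ⟨_, h₂, hW₂⟩ := reach_iff_exists_walkFromTo.1 hyv
    obtain ⟨l₁, rfl⟩ := h₁.exists_eq_concat
    obtain ⟨l₂, rfl⟩ := h₂.exists_eq_cons
    have hl : WalkFromTo E v v (l₁ ++ x :: y :: l₂) :=
      WalkFromTo.append_cons_cons_iff.2 ⟨h₁, hSE _ hS, h₂⟩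
    have hxy : (x, y) ∈ (l₁ ++ x :: y :: l₂).zip (l₁ ++ x :: y :: l₂).tail :=
      List.mem_zip_tail_iff.2 ⟨l₁, l₂, rfl⟩
    refine ⟨_, hl.1, List.two_le_length_of_mem_zip_tail hxy, by rw [hl.2.1, hl.2.2],
      fun z hz => ?_, hl.head_mem, (x, y), hxy, hS⟩
    rw [← List.singleton_append, ← List.append_assoc, List.mem_append] at hz
    exact hz.elim (hW₁ z) (hW₂ z)

end Reach

section Torso

variable {E : V → V → Prop} {C W : Set V} {a b x y : V}

theorem exists_walk_interior_compl_iff :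
    (∃ l, WalkFromTo E a b l ∧ (∀ z ∈ l.tail.dropLast, z ∉ C) ∧ (x, y) ∈ l.zip l.tail) ↔
      ReflTransGen (fun p q => E p q ∧ q ∉ C) a x ∧ E x y ∧
        ReflTransGen (fun p q => E p q ∧ p ∉ C) y b := by
  constructor
  · rintro ⟨_, hl, hC, hxy⟩
    obtain ⟨l₁, l₂, rfl⟩ := List.mem_zip_tail_iff.1 hxy
    obtain ⟨h₁, hxy, h₂⟩ := WalkFromTo.append_cons_cons_iff.1 hl
    rw [List.tail_dropLast_append_cons_cons] at hC
    refine ⟨WalkFromTo.reflTransGen ⟨?_, h₁.2⟩, hxy, WalkFromTo.reflTransGen ⟨?_, h₂.2⟩⟩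
    · exact List.isChain_and_right_iff.2 ⟨h₁.1, fun z hz => hC z (List.mem_append_left _ hz)⟩
    · exact List.isChain_and_left_iff.2 ⟨h₂.1, fun z hz => hC z (List.mem_append_right _ hz)⟩
  · rintro ⟨h₁, hxy, h₂⟩
    obtain ⟨_, w₁⟩ := h₁.exists_walkFromTo
    obtain ⟨_, w₂⟩ := h₂.exists_walkFromTo
    obtain ⟨l₁, rfl⟩ := w₁.exists_eq_concat
    obtain ⟨l₂, rfl⟩ := w₂.exists_eq_cons
    obtain ⟨hc₁, hC₁⟩ := List.isChain_and_right_iff.1 w₁.1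
    obtain ⟨hc₂, hC₂⟩ := List.isChain_and_left_iff.1 w₂.1
    refine ⟨l₁ ++ x :: y :: l₂,
      WalkFromTo.append_cons_cons_iff.2 ⟨⟨hc₁, w₁.2⟩, hxy, ⟨hc₂, w₂.2⟩⟩, fun z hz => ?_,
      List.mem_zip_tail_iff.2 ⟨l₁, l₂, rfl⟩⟩
    rw [List.tail_dropLast_append_cons_cons, List.mem_append] at hz
    exact hz.elim (hC₁ z) (hC₂ z)

theorem torsoE_iff : torsoE E C a b ↔ a ∈ C ∧ b ∈ C ∧
    ∃ x y, ReflTransGen (fun p q => E p q ∧ q ∉ C) a x ∧ E x y ∧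
      ReflTransGen (fun p q => E p q ∧ p ∉ C) y b := by
  refine and_congr_right fun _ => and_congr_right fun _ => ?_
  simp_rw [← exists_walk_interior_compl_iff]
  constructor
  · rintro ⟨l, hl, hlen, hC⟩
    obtain ⟨x, y, l₂, rfl⟩ : ∃ x y l₂, l = x :: y :: l₂ := by
      match l, hlen with
      | x :: y :: l₂, _ => exact ⟨x, y, l₂, rfl⟩
    exact ⟨x, y, _, hl, hC, List.mem_zip_tail_iff.2 ⟨[], l₂, rfl⟩⟩
  · rintro ⟨x, y, l, hl, hC, hxy⟩
    exact ⟨l, hl, List.two_le_length_of_mem_zip_tail hxy, hC⟩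

theorem mem_torsoS_iff {S : Set (V × V)} (hSE : ∀ p ∈ S, E p.1 p.2) {p : V × V} :
    p ∈ torsoS E C S ↔ p.1 ∈ C ∧ p.2 ∈ C ∧
      ∃ q ∈ S, ReflTransGen (fun p q => E p q ∧ q ∉ C) p.1 q.1 ∧
        ReflTransGen (fun p q => E p q ∧ p ∉ C) q.2 p.2 := by
  constructor
  · rintro (⟨hS, h₁, h₂⟩ | ⟨h₁, h₂, l, hl, -, hC, q, hq, hS⟩)
    · exact ⟨h₁, h₂, p, hS, .refl, .refl⟩
    · obtain ⟨hin, -, hout⟩ := exists_walk_interior_compl_iff.1 ⟨l, hl, hC, hq⟩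
      exact ⟨h₁, h₂, q, hS, hin, hout⟩
  · rintro ⟨h₁, h₂, q, hS, hin, hout⟩
    obtain ⟨l, hl, hC, hq⟩ := exists_walk_interior_compl_iff.2 ⟨hin, hSE q hS, hout⟩
    exact Or.inr ⟨h₁, h₂, l, hl, List.two_le_length_of_mem_zip_tail hq, hC, q, hq, hS⟩

theorem torsoE_of_mem_torsoS {S : Set (V × V)} (hSE : ∀ p ∈ S, E p.1 p.2) :
    ∀ p ∈ torsoS E C S, torsoE E C p.1 p.2 := by
  intro p hp
  obtain ⟨h₁, h₂, q, hS, hin, hout⟩ := (mem_torsoS_iff hSE).1 hp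
  exact torsoE_iff.2 ⟨h₁, h₂, q.1, q.2, hin, hSE q hS, hout⟩

theorem Reach.of_reflTransGen_into_compl (hW : W ⊆ C) (ha : a ∉ W)
    (h : ReflTransGen (fun p q => E p q ∧ q ∉ C) a x) : Reach E W a x := by
  induction h with
  | refl => exact ⟨ha, ha, .refl⟩
  | tail _ hmx ih => exact ih.tail hmx.1 fun h => hmx.2 (hW h)

theorem Reach.of_reflTransGen_out_of_compl (hW : W ⊆ C) (hb : b ∉ W)
    (h : ReflTransGen (fun p q => E p q ∧ p ∉ C) y b) : Reach E W y b := by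
  induction h using Relation.ReflTransGen.head_induction_on with
  | refl => exact ⟨hb, hb, .refl⟩
  | head hym _ ih => exact Reach.head hym.1 (fun h => hym.2 (hW h)) ih

theorem Reach.of_torsoE (hW : W ⊆ C) (h : torsoE E C a b) (ha : a ∉ W) (hb : b ∉ W) :
    Reach E W a b := by
  obtain ⟨-, -, x, y, hin, hxy, hout⟩ := torsoE_iff.1 h
  have hax := Reach.of_reflTransGen_into_compl hW ha hin
  have hyb := Reach.of_reflTransGen_out_of_compl hW hb hout
  exact (hax.tail hxy hyb.1).trans hyb

theorem Reach.of_reach_torsoE (hW : W ⊆ C) (h : Reach (torsoE E C) W a b) : Reach E W a b := by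
  obtain ⟨ha, -, h⟩ := h
  induction h with
  | refl => exact ⟨ha, ha, .refl⟩
  | tail _ hmc ih => exact ih.trans (Reach.of_torsoE hW hmc.1 hmc.2.1 hmc.2.2)

theorem Reach.exists_torsoE_prefix (ha : a ∈ C) (h : Reach E W a x) :
    ∃ c ∈ C, Reach (torsoE E C) W a c ∧ ReflTransGen (fun p q => E p q ∧ q ∉ C) c x := by
  obtain ⟨haW, -, h⟩ := h
  induction h with
  | refl => exact ⟨a, ha, ⟨haW, haW, .refl⟩, .refl⟩
  | @tail m x _ hmx ih =>
    obtain ⟨c, hc, hac, hcm⟩ := ih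
    by_cases hx : x ∈ C
    · exact ⟨x, hx, hac.tail (torsoE_iff.2 ⟨hc, hx, m, x, hcm, hmx.1, .refl⟩) hmx.2.2, .refl⟩
    · exact ⟨c, hc, hac, hcm.tail ⟨hmx.1, hx⟩⟩

theorem Reach.exists_torsoE_suffix (hb : b ∈ C) (h : Reach E W y b) :
    ∃ d ∈ C, ReflTransGen (fun p q => E p q ∧ p ∉ C) y d ∧ Reach (torsoE E C) W d b := by
  obtain ⟨-, hbW, h⟩ := h
  induction h using Relation.ReflTransGen.head_induction_on with
  | refl => exact ⟨b, hb, .refl, ⟨hbW, hbW, .refl⟩⟩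
  | @head y m hym _ ih =>
    obtain ⟨d, hd, hmd, hdb⟩ := ih
    by_cases hy : y ∈ C
    · exact ⟨y, hy, .refl, hdb.head (torsoE_iff.2 ⟨hy, hd, y, m, .refl, hym.1, hmd⟩) hym.2.1⟩
    · exact ⟨d, hd, hmd.head ⟨hym.1, hy⟩, hdb⟩

end Torso

theorem stmt14_general (E : V → V → Prop) (C : Set V) (S : Set (V × V))
    (hSE : ∀ p ∈ S, E p.1 p.2) (v : V) (hv : v ∈ C) (W : Set V) (hW : W ⊆ C) :
    HasSCWThrough E S W v ↔ HasSCWThrough (torsoE E C) (torsoS E C S) W v := by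
  rw [hasSCWThrough_iff hSE, hasSCWThrough_iff (torsoE_of_mem_torsoS hSE)]
  constructor
  · rintro ⟨q, hS, hvq, hqv⟩
    obtain ⟨c, hc, hvc, hcq⟩ := hvq.exists_torsoE_prefix hv
    obtain ⟨d, hd, hqd, hdv⟩ := hqv.exists_torsoE_suffix hv
    exact ⟨(c, d), (mem_torsoS_iff hSE).2 ⟨hc, hd, q, hS, hcq, hqd⟩, hvc, hdv⟩
  · rintro ⟨p, hp, hvp, hpv⟩
    obtain ⟨-, -, q, hS, hpq, hqp⟩ := (mem_torsoS_iff hSE).1 hp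
    replace hvp := Reach.of_reach_torsoE hW hvp
    replace hpv := Reach.of_reach_torsoE hW hpv
    exact ⟨q, hS, hvp.trans (.of_reflTransGen_into_compl hW hvp.2.1 hpq),
      (Reach.of_reflTransGen_out_of_compl hW hpv.1 hqp).trans hpv⟩

/-- Torso preserves `S`-closed-walks: for `v ∈ C` and `W ⊆ C`, the graph
`G ∖ W` has a closed walk through `v` using an edge of `S` iff the torso
`(G', S') = torso(G, C, S)` minus `W` has a closed walk through `v` using an
edge of `S'`. -/
theorem stmt14 [Fintype V] (E : V → V → Prop) (C : Set V) (S : Set (V × V))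
    (hSE : ∀ p ∈ S, E p.1 p.2) (v : V) (hv : v ∈ C) (W : Set V) (hW : W ⊆ C) :
    HasSCWThrough E S W v ↔ HasSCWThrough (torsoE E C) (torsoS E C S) W v :=
  stmt14_general E C S hSE v hv W hW
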